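/- Let γ ∈ [0,1] and let E_γ denote the two-qubit depolarizing channel E_γ(ρ) = (1−γ)ρ + (γ/4)I₄. Then the measured mutual information of the depolarized Bell state equals that of the depolarized shared random bit: I_m(E_γ(|Φ⟩⟨Φ|)) = I_m(E_γ(σ₂)) = ((2−γ)/2)·log₂(2−γ) + (γ/2)·log₂γ. -/

import Mathlib

open scoped Kronecker Matrix Classical

noncomputable section

/-- Base-2 Shannon entropy of a finitely supported distribution. -/
def shannon {α : Type*} [Fintype α] (p : α → ℝ) : ℝ :=
  -∑ x, p x * Real.logb 2 (p x)

/-- Base-2 von Neumann entropy of a matrix (junk value `0` if not Hermitian),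
computed from the eigenvalues. -/
def vnEntropy {d : Type*} [Fintype d] [DecidableEq d] (ρ : Matrix d d ℂ) : ℝ :=
  if h : ρ.IsHermitian then -∑ k, h.eigenvalues k * Real.logb 2 (h.eigenvalues k) else 0

/-- A projection-valued measure on a finite-dimensional space: a finite family of
mutually orthogonal self-adjoint projections summing to the identity. -/
structure PVM (ι : Type*) (d : Type*) [Fintype d] [DecidableEq d] where
  [fintype : Fintype ι]
  proj : ι → Matrix d d ℂ
  herm : ∀ a, (proj a).IsHermitian
  idem : ∀ a, proj a * proj a = proj a
  orthogonal : ∀ a b, a ≠ b → proj a * proj b = 0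
  complete : ∑ a, proj a = 1

/-- Outcome distribution of a PVM measurement on a state. -/
def pvmProb {ι d : Type*} [Fintype d] [DecidableEq d] (P : PVM ι d)
    (ρ : Matrix d d ℂ) : ι → ℝ :=
  fun a => ((P.proj a * ρ).trace).re

/-- Shannon entropy of the outcome distribution of a PVM measurement. -/
def pvmEntropy {ι d : Type*} [Fintype d] [DecidableEq d] (P : PVM ι d)
    (ρ : Matrix d d ℂ) : ℝ :=
  letI := P.fintype
  shannon (pvmProb P ρ)

/-- Joint outcome distribution of a product of two local PVMs on a bipartite state. -/
def jointProb {ιA ιB dA dB : Type*} [Fintype dA] [DecidableEq dA] [Fintype dB]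
    [DecidableEq dB] (P : PVM ιA dA) (Q : PVM ιB dB)
    (ρ : Matrix (dA × dB) (dA × dB) ℂ) : ιA × ιB → ℝ :=
  fun ab => (((P.proj ab.1 ⊗ₖ Q.proj ab.2) * ρ).trace).re

/-- Shannon entropy of the joint outcome distribution of a product of two local PVMs. -/
def jointEntropy {ιA ιB dA dB : Type*} [Fintype dA] [DecidableEq dA] [Fintype dB]
    [DecidableEq dB] (P : PVM ιA dA) (Q : PVM ιB dB)
    (ρ : Matrix (dA × dB) (dA × dB) ℂ) : ℝ :=
  letI := P.fintype; letI := Q.fintype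
  shannon (jointProb P Q ρ)

/-- Mutual information `H(P_A) + H(P_B) - H(P_{AB})` of the joint outcome distribution
of a product of two local PVMs on a bipartite state. -/
def miOf {ιA ιB dA dB : Type*} [Fintype dA] [DecidableEq dA] [Fintype dB]
    [DecidableEq dB] (P : PVM ιA dA) (Q : PVM ιB dB)
    (ρ : Matrix (dA × dB) (dA × dB) ℂ) : ℝ :=
  letI := P.fintype; letI := Q.fintype
  shannon (fun a : ιA => ∑ b : ιB, jointProb P Q ρ (a, b)) +
    shannon (fun b : ιB => ∑ a : ιA, jointProb P Q ρ (a, b)) -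
    shannon (jointProb P Q ρ)

/-- Measured mutual information: the supremum of `miOf` over all pairs of local PVMs. -/
def measuredMI {dA dB : Type*} [Fintype dA] [DecidableEq dA] [Fintype dB] [DecidableEq dB]
    (ρ : Matrix (dA × dB) (dA × dB) ℂ) : ℝ :=
  sSup { r : ℝ | ∃ (ιA ιB : Type) (P : PVM ιA dA) (Q : PVM ιB dB), r = miOf P Q ρ }

/-- The computational-basis PVM. -/
def compPVM (d : Type*) [Fintype d] [DecidableEq d] : PVM d d where
  proj x := Matrix.diagonal (fun y => if y = x then (1 : ℂ) else 0)
  herm x := by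
    refine Matrix.isHermitian_diagonal_of_self_adjoint _ ?_
    funext y
    by_cases h : y = x <;> simp [h]
  idem x := by
    rw [Matrix.diagonal_mul_diagonal]
    ext y z
    by_cases h : y = z
    · subst h
      by_cases h2 : y = x <;> simp [Matrix.diagonal_apply, h2]
    · simp [Matrix.diagonal_apply, h]
  orthogonal a b hab := by
    rw [Matrix.diagonal_mul_diagonal]
    have h0 : (fun y => (if y = a then (1:ℂ) else 0) * (if y = b then (1:ℂ) else 0))
        = fun _ => (0:ℂ) := by
      funext y
      by_cases h : y = a <;> by_cases h' : y = b <;> simp_all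
    rw [h0, Matrix.diagonal_zero]
  complete := by
    ext y z
    rw [Matrix.sum_apply]
    by_cases h : y = z
    · subst h
      simp [Matrix.diagonal_apply, Matrix.one_apply]
    · simp [Matrix.diagonal_apply, Matrix.one_apply, h]

/-- Amplitudes of the two-qubit Bell state `|Φ⟩ = (|00⟩ + |11⟩)/√2`. -/
def bellVec : Fin 2 × Fin 2 → ℂ :=
  fun x => if x.1 = x.2 then ((Real.sqrt 2 : ℝ) : ℂ)⁻¹ else 0

/-- The two-qubit Bell state `|Φ⟩⟨Φ|`. -/
def bellState : Matrix (Fin 2 × Fin 2) (Fin 2 × Fin 2) ℂ :=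
  Matrix.of fun x y => bellVec x * star (bellVec y)

/-- The two-qubit shared random bit `σ₂ = (|00⟩⟨00| + |11⟩⟨11|)/2`. -/
def sigma2 : Matrix (Fin 2 × Fin 2) (Fin 2 × Fin 2) ℂ :=
  Matrix.of fun x y => if x = y ∧ x.1 = x.2 then (1 : ℂ)/2 else 0

/-- The two-qubit depolarizing channel `E_γ(ρ) = (1-γ)ρ + (γ/4)I₄`. -/
def depol2 (γ : ℝ) (ρ : Matrix (Fin 2 × Fin 2) (Fin 2 × Fin 2) ℂ) :
    Matrix (Fin 2 × Fin 2) (Fin 2 × Fin 2) ℂ :=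
  (1 - (γ : ℂ)) • ρ + ((γ : ℂ)/4) • (1 : Matrix (Fin 2 × Fin 2) (Fin 2 × Fin 2) ℂ)

/-!
For a product of local projective measurements on `E_γ(ρ)`, with `ρ` either state, let `q` be
the joint outcome distribution. Both states are positive with maximally mixed marginals, so the
marginals of `q` are `p_A(a) = tr Π_a / 2` and `p_B(b) = tr Π_b / 2`, while `tr((Π_a ⊗ Π_b) ρ)`
lies between `0` and `min(tr Π_a, tr Π_b) / 2 ≤ tr Π_a · tr Π_b / 2` (traces of projections are
natural numbers). Hence the likelihood ratio `q / (p_A p_B)` lies in `[γ, 2 - γ]`. The mutual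
information is the `p_A p_B`-average of `φ(r) = r log₂ r` over this ratio, whose mean is `1`; by
convexity `φ` lies below its chord on `[γ, 2 - γ]`, whose value at the midpoint `1` is
`(φ(γ) + φ(2 - γ)) / 2`. Measuring both qubits in the computational basis attains this value.
-/

open Real Matrix
open scoped ComplexOrder

section MutualInfo

def mutualInfo {α β : Type*} [Fintype α] [Fintype β] (q : α × β → ℝ) : ℝ :=
  shannon (fun a => ∑ b, q (a, b)) + shannon (fun b => ∑ a, q (a, b)) - shannon q

theorem mutualInfo_eq_sum_mul_logb_div {α β : Type*} [Fintype α] [Fintype β]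
    (q : α × β → ℝ) (hq : 0 ≤ q) :
    mutualInfo q = ∑ x, q x * logb 2 (q x / ((∑ b, q (x.1, b)) * ∑ a, q (a, x.2))) := by
  set pA : α → ℝ := fun a => ∑ b, q (a, b)
  set pB : β → ℝ := fun b => ∑ a, q (a, b)
  have hterm : ∀ x, q x * logb 2 (q x / (pA x.1 * pB x.2))
      = q x * logb 2 (q x) - q x * logb 2 (pA x.1) - q x * logb 2 (pB x.2) := by
    rintro ⟨a, b⟩
    rcases (hq (a, b)).eq_or_lt with hqab | hqab
    · simp [← hqab]
    have hpA : 0 < pA a :=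
      hqab.trans_le (Finset.single_le_sum (fun b _ => hq (a, b)) (Finset.mem_univ b))
    have hpB : 0 < pB b :=
      hqab.trans_le (Finset.single_le_sum (fun a _ => hq (a, b)) (Finset.mem_univ a))
    rw [logb_div hqab.ne' (by positivity), logb_mul hpA.ne' hpB.ne']
    ring
  have hA : ∑ x : α × β, q x * logb 2 (pA x.1) = ∑ a, pA a * logb 2 (pA a) := by
    simp only [Fintype.sum_prod_type, pA, Finset.sum_mul]
  have hB : ∑ x : α × β, q x * logb 2 (pB x.2) = ∑ b, pB b * logb 2 (pB b) := by
    simp only [Fintype.sum_prod_type_right, pB, Finset.sum_mul]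
  calc mutualInfo q
      = ∑ x, q x * logb 2 (q x) - ∑ x, q x * logb 2 (pA x.1)
          - ∑ x, q x * logb 2 (pB x.2) := by
        rw [hA, hB, mutualInfo, shannon, shannon, shannon]
        ring
    _ = _ := by
        rw [← Finset.sum_sub_distrib, ← Finset.sum_sub_distrib]
        exact Finset.sum_congr rfl fun x _ => (hterm x).symm

theorem mul_logb_le_secant {x y z : ℝ} (hx : 0 ≤ x) (hxy : x ≤ y) (hyz : y ≤ z) :
    (z - x) * (y * logb 2 y) ≤ (z - y) * (x * logb 2 x) + (y - x) * (z * logb 2 z) := by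
  have hconv : ConvexOn ℝ (Set.Ici 0) fun t : ℝ => t * logb 2 t := by
    have h : (fun t : ℝ => t * logb 2 t) = fun t => (log 2)⁻¹ • (t * log t) := by
      funext t
      rw [logb, smul_eq_mul]
      ring
    exact h ▸ convexOn_mul_log.smul (inv_nonneg.2 (log_nonneg one_le_two))
  rcases hxy.eq_or_lt with rfl | hxy
  · simp
  rcases hyz.eq_or_lt with rfl | hyz
  · simp
  exact hconv.secant_mono_aux1 hx (hx.trans (hxy.trans hyz).le) hxy hyz

theorem mul_logb_div_le_secant {γ q w : ℝ} (hγ : 0 ≤ γ) (hw : 0 ≤ w)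
    (hlow : γ * w ≤ q) (hup : q ≤ (2 - γ) * w) :
    (2 - 2 * γ) * (q * logb 2 (q / w))
      ≤ ((2 - γ) * w - q) * (γ * logb 2 γ) + (q - γ * w) * ((2 - γ) * logb 2 (2 - γ)) := by
  rcases hw.eq_or_lt with rfl | hw
  · obtain rfl : q = 0 := by linarith
    simp
  obtain ⟨t, rfl⟩ : ∃ t, q = w * t := ⟨q / w, by field_simp⟩
  rw [mul_div_cancel_left₀ t hw.ne']
  have hsec := mul_logb_le_secant (z := 2 - γ) hγ (le_of_mul_le_mul_left (by linarith) hw)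
    (le_of_mul_le_mul_left (by linarith) hw)
  nlinarith [mul_le_mul_of_nonneg_left hsec hw.le]

theorem sum_mul_logb_div_le {ι : Type*} [Fintype ι] {q w : ι → ℝ} {γ : ℝ}
    (hγ0 : 0 ≤ γ) (hγ1 : γ ≤ 1) (hw : 0 ≤ w) (hq1 : ∑ i, q i = 1) (hw1 : ∑ i, w i = 1)
    (hlow : ∀ i, γ * w i ≤ q i) (hup : ∀ i, q i ≤ (2 - γ) * w i) :
    ∑ i, q i * logb 2 (q i / w i)
      ≤ ((2 - γ) / 2) * logb 2 (2 - γ) + (γ / 2) * logb 2 γ := by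
  rcases hγ1.eq_or_lt with rfl | hγ1
  · have hqw : ∀ i, q i = w i := fun i =>
      le_antisymm (by linarith [hup i]) (by linarith [hlow i])
    have hterm : ∀ i, q i * logb 2 (q i / w i) = 0 := fun i => by
      rcases eq_or_ne (w i) 0 with h | h <;> simp [hqw, h]
    simp only [hterm, Finset.sum_const_zero]
    norm_num
  have hsum := Finset.sum_le_sum fun i (_ : i ∈ Finset.univ) =>
    mul_logb_div_le_secant hγ0 (hw i) (hlow i) (hup i)
  simp only [← Finset.mul_sum, Finset.sum_add_distrib, ← Finset.sum_mul, Finset.sum_sub_distrib,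
    hq1, hw1] at hsum
  nlinarith

theorem mutualInfo_depolarized_sharedBit (γ : ℝ) :
    mutualInfo (fun x : Fin 2 × Fin 2 => if x.1 = x.2 then (2 - γ) / 4 else γ / 4)
      = ((2 - γ) / 2) * logb 2 (2 - γ) + (γ / 2) * logb 2 γ := by
  have hquarter : ∀ t : ℝ, t / 4 * logb 2 (t / 4) = t / 4 * logb 2 t - t / 2 := fun t => by
    rcases eq_or_ne t 0 with rfl | ht
    · simp
    rw [logb_div ht four_ne_zero, show (4 : ℝ) = 2 ^ 2 by norm_num, logb_pow,
      logb_self_eq_one one_lt_two]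
    ring
  have hmarg : γ / 4 + (2 - γ) / 4 = 1 / 2 := by ring
  have hmarg' : (2 - γ) / 4 + γ / 4 = 1 / 2 := by ring
  simp only [mutualInfo, shannon, Fintype.sum_prod_type, Fin.sum_univ_two, Fin.isValue,
    ↓reduceIte, zero_ne_one, one_ne_zero, ite_mul, hquarter, hmarg, hmarg', one_div, logb_inv,
    Nat.one_lt_ofNat, logb_self_eq_one]
  ring

end MutualInfo

section Projection

variable {n : Type*} [Fintype n]

theorem exists_trace_eq_natCast_of_isIdempotentElem [DecidableEq n] {X : Matrix n n ℂ}
    (hX : IsIdempotentElem X) : ∃ k : ℕ, X.trace = k :=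
  ⟨_, by
    rw [← trace_toLin'_eq]
    exact (LinearMap.IsIdempotentElem.isProj_range _ (hX.map toLinAlgEquiv')).trace⟩

theorem re_trace_mul_nonneg_of_isIdempotentElem {X ρ : Matrix n n ℂ} (hρ : ρ.PosSemidef)
    (hX : X.IsHermitian) (hX' : IsIdempotentElem X) : 0 ≤ (X * ρ).trace.re := by
  have h : (X * ρ).trace = (X * ρ * Xᴴ).trace := by
    rw [hX.eq, trace_mul_cycle, hX'.eq]
  rw [h]
  exact (Complex.nonneg_iff.1 (hρ.mul_mul_conjTranspose_same X).trace_nonneg).1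

theorem re_trace_mul_le_of_add_eq {X Y Z ρ : Matrix n n ℂ} (hρ : ρ.PosSemidef)
    (hZ : Z.IsHermitian) (hZ' : IsIdempotentElem Z) (h : X + Z = Y) :
    (X * ρ).trace.re ≤ (Y * ρ).trace.re := by
  rw [← h, add_mul, trace_add, Complex.add_re]
  linarith [re_trace_mul_nonneg_of_isIdempotentElem hρ hZ hZ']

end Projection

section Kronecker

variable {l m n p : Type*}

theorem Matrix.IsHermitian.kronecker {A : Matrix m m ℂ} {B : Matrix n n ℂ}
    (hA : A.IsHermitian) (hB : B.IsHermitian) : (A ⊗ₖ B).IsHermitian := by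
  rw [IsHermitian, conjTranspose_kronecker, hA.eq, hB.eq]

theorem IsIdempotentElem.kronecker [Fintype m] [Fintype n] {A : Matrix m m ℂ}
    {B : Matrix n n ℂ} (hA : IsIdempotentElem A) (hB : IsIdempotentElem B) :
    IsIdempotentElem (A ⊗ₖ B) := by
  rw [IsIdempotentElem, ← mul_kronecker_mul, hA.eq, hB.eq]

variable {ι : Type*} [Fintype ι]

theorem sum_kronecker_right (A : Matrix l m ℂ) (B : ι → Matrix n p ℂ) :
    ∑ i, A ⊗ₖ B i = A ⊗ₖ ∑ i, B i :=
  (map_sum (kroneckerBilinear (R := ℂ) A) B Finset.univ).symm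

theorem sum_kronecker_left (A : ι → Matrix l m ℂ) (B : Matrix n p ℂ) :
    ∑ i, A i ⊗ₖ B = (∑ i, A i) ⊗ₖ B := by
  ext x y
  simp [Matrix.sum_apply, Finset.sum_mul]

end Kronecker

section JointProb

theorem PVM.sum_trace {ι d : Type*} [Fintype d] [DecidableEq d] (P : PVM ι d) :
    letI := P.fintype
    ∑ a, (P.proj a).trace = Fintype.card d := by
  rw [← trace_sum, P.complete, trace_one]

theorem PVM.re_trace_nonneg {ι d : Type*} [Fintype d] [DecidableEq d] (P : PVM ι d) (a : ι) :
    0 ≤ (P.proj a).trace.re := by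
  simpa using re_trace_mul_nonneg_of_isIdempotentElem PosSemidef.one (P.herm a) (P.idem a)

theorem compPVM_proj (d : Type*) [Fintype d] [DecidableEq d] (x : d) :
    (compPVM d).proj x = diagonal fun y => if y = x then 1 else 0 := rfl

variable {ιA ιB dA dB : Type*} [Fintype dA] [DecidableEq dA] [Fintype dB] [DecidableEq dB]
  (P : PVM ιA dA) (Q : PVM ιB dB) (ρ : Matrix (dA × dB) (dA × dB) ℂ)

theorem miOf_eq_mutualInfo :
    letI := P.fintype
    letI := Q.fintype
    miOf P Q ρ = mutualInfo (jointProb P Q ρ) := rfl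

theorem PVM.sum_jointProb_left (b : ιB) :
    letI := P.fintype
    ∑ a, jointProb P Q ρ (a, b) = ((1 ⊗ₖ Q.proj b) * ρ).trace.re := by
  let := P.fintype
  simp only [jointProb, ← Complex.re_sum, ← trace_sum, ← Finset.sum_mul,
    sum_kronecker_left, P.complete]

theorem PVM.sum_jointProb_right (a : ιA) :
    letI := Q.fintype
    ∑ b, jointProb P Q ρ (a, b) = ((P.proj a ⊗ₖ 1) * ρ).trace.re := by
  let := Q.fintype
  simp only [jointProb, ← Complex.re_sum, ← trace_sum, ← Finset.sum_mul,
    sum_kronecker_right, Q.complete]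

theorem jointProb_compPVM (x : dA × dB) :
    jointProb (compPVM dA) (compPVM dB) ρ x = (ρ x x).re := by
  rw [jointProb, compPVM_proj, compPVM_proj, diagonal_kronecker_diagonal, trace, Complex.re_sum,
    Finset.sum_eq_single x]
  · simp [diagonal_mul]
  · rintro y - hyx
    simp only [diag_apply, diagonal_mul, ite_mul, one_mul, zero_mul, ← ite_and, ← Prod.ext_iff,
      if_neg hyx, Complex.zero_re]
  · simp

end JointProb

section TwoQubit

variable {γ : ℝ} {ρ : Matrix (Fin 2 × Fin 2) (Fin 2 × Fin 2) ℂ}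

def HasMaximallyMixedMarginals (ρ : Matrix (Fin 2 × Fin 2) (Fin 2 × Fin 2) ℂ) : Prop :=
  (∀ A : Matrix (Fin 2) (Fin 2) ℂ, ((A ⊗ₖ 1) * ρ).trace = A.trace / 2) ∧
    ∀ B : Matrix (Fin 2) (Fin 2) ℂ, ((1 ⊗ₖ B) * ρ).trace = B.trace / 2

theorem trace_kronecker_mul_depol2 (γ : ℝ) (ρ : Matrix (Fin 2 × Fin 2) (Fin 2 × Fin 2) ℂ)
    (A B : Matrix (Fin 2) (Fin 2) ℂ) :
    ((A ⊗ₖ B) * depol2 γ ρ).trace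
      = (1 - γ) * ((A ⊗ₖ B) * ρ).trace + γ / 4 * (A.trace * B.trace) := by
  rw [depol2, Matrix.mul_add, Matrix.mul_smul, Matrix.mul_smul, Matrix.mul_one,
    trace_add, trace_smul, trace_smul, trace_kronecker, smul_eq_mul, smul_eq_mul]

theorem HasMaximallyMixedMarginals.depol2 (h : HasMaximallyMixedMarginals ρ) (γ : ℝ) :
    HasMaximallyMixedMarginals (depol2 γ ρ) := by
  constructor <;> intro A
  · rw [trace_kronecker_mul_depol2, h.1, trace_one, Fintype.card_fin]
    push_cast
    ring
  · rw [trace_kronecker_mul_depol2, h.2, trace_one, Fintype.card_fin]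
    push_cast
    ring

theorem re_trace_kronecker_mul_le (hρ : ρ.PosSemidef) (hm : HasMaximallyMixedMarginals ρ)
    {A B : Matrix (Fin 2) (Fin 2) ℂ} (hA : A.IsHermitian) (hA' : IsIdempotentElem A)
    (hB : B.IsHermitian) (hB' : IsIdempotentElem B) :
    ((A ⊗ₖ B) * ρ).trace.re ≤ A.trace.re * B.trace.re / 2 := by
  have hleA := re_trace_mul_le_of_add_eq hρ (hA.kronecker (isHermitian_one.sub hB))
    (hA'.kronecker hB'.one_sub) (by rw [← kronecker_add, add_sub_cancel])
  have hleB := re_trace_mul_le_of_add_eq hρ ((isHermitian_one.sub hA).kronecker hB)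
    (hA'.one_sub.kronecker hB') (by rw [← add_kronecker, add_sub_cancel])
  rw [hm.1, Complex.div_ofNat_re] at hleA
  rw [hm.2, Complex.div_ofNat_re] at hleB
  obtain ⟨k, hk⟩ := exists_trace_eq_natCast_of_isIdempotentElem hA'
  obtain ⟨l, hl⟩ := exists_trace_eq_natCast_of_isIdempotentElem hB'
  rw [hk, Complex.natCast_re] at hleA ⊢
  rw [hl, Complex.natCast_re] at hleB ⊢
  rcases Nat.eq_zero_or_pos l with rfl | hl
  · simpa using hleB
  · have : (1 : ℝ) ≤ l := by exact_mod_cast hl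
    nlinarith [(Nat.cast_nonneg k : (0 : ℝ) ≤ k)]

theorem re_trace_kronecker_mul_depol2_bounds (hγ1 : γ ≤ 1) (hρ : ρ.PosSemidef)
    (hm : HasMaximallyMixedMarginals ρ) {A B : Matrix (Fin 2) (Fin 2) ℂ} (hA : A.IsHermitian)
    (hA' : IsIdempotentElem A) (hB : B.IsHermitian) (hB' : IsIdempotentElem B) :
    γ * (A.trace.re / 2 * (B.trace.re / 2)) ≤ ((A ⊗ₖ B) * depol2 γ ρ).trace.re ∧
      ((A ⊗ₖ B) * depol2 γ ρ).trace.re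
        ≤ (2 - γ) * (A.trace.re / 2 * (B.trace.re / 2)) := by
  have hX0 := re_trace_mul_nonneg_of_isIdempotentElem hρ (hA.kronecker hB) (hA'.kronecker hB')
  have hX1 := re_trace_kronecker_mul_le hρ hm hA hA' hB hB'
  obtain ⟨k, hk⟩ := exists_trace_eq_natCast_of_isIdempotentElem hA'
  obtain ⟨l, hl⟩ := exists_trace_eq_natCast_of_isIdempotentElem hB'
  have h : ((A ⊗ₖ B) * depol2 γ ρ).trace.re
      = (1 - γ) * ((A ⊗ₖ B) * ρ).trace.re + γ / 4 * (k * l) := by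
    simp [trace_kronecker_mul_depol2, hk, hl, Complex.mul_re]
  rw [hk, hl, Complex.natCast_re, Complex.natCast_re] at hX1 ⊢
  rw [h]
  have hγ : 0 ≤ 1 - γ := sub_nonneg.2 hγ1
  constructor <;> nlinarith [mul_nonneg hγ hX0, mul_le_mul_of_nonneg_left hX1 hγ]

theorem miOf_depol2_le (hγ0 : 0 ≤ γ) (hγ1 : γ ≤ 1) (hρ : ρ.PosSemidef)
    (hm : HasMaximallyMixedMarginals ρ) {ιA ιB : Type*} (P : PVM ιA (Fin 2))
    (Q : PVM ιB (Fin 2)) :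
    miOf P Q (depol2 γ ρ) ≤ ((2 - γ) / 2) * logb 2 (2 - γ) + (γ / 2) * logb 2 γ := by
  let := P.fintype
  let := Q.fintype
  set q := jointProb P Q (depol2 γ ρ)
  set pA : ιA → ℝ := fun a => (P.proj a).trace.re / 2
  set pB : ιB → ℝ := fun b => (Q.proj b).trace.re / 2
  have hmargA : ∀ a, ∑ b, q (a, b) = pA a := fun a => by
    rw [P.sum_jointProb_right Q, (hm.depol2 γ).1, Complex.div_ofNat_re]
  have hmargB : ∀ b, ∑ a, q (a, b) = pB b := fun b => by
    rw [P.sum_jointProb_left Q, (hm.depol2 γ).2, Complex.div_ofNat_re]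
  have hbounds : ∀ x : ιA × ιB,
      γ * (pA x.1 * pB x.2) ≤ q x ∧ q x ≤ (2 - γ) * (pA x.1 * pB x.2) := fun x =>
    re_trace_kronecker_mul_depol2_bounds hγ1 hρ hm (P.herm _) (P.idem _) (Q.herm _) (Q.idem _)
  have hpA : ∀ a, 0 ≤ pA a := fun a => div_nonneg (P.re_trace_nonneg a) zero_le_two
  have hpB : ∀ b, 0 ≤ pB b := fun b => div_nonneg (Q.re_trace_nonneg b) zero_le_two
  have hsumA : ∑ a, pA a = 1 := by
    simp [pA, ← Finset.sum_div, ← Complex.re_sum, P.sum_trace]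
  have hsumB : ∑ b, pB b = 1 := by
    simp [pB, ← Finset.sum_div, ← Complex.re_sum, Q.sum_trace]
  have hq0 : 0 ≤ q := fun x =>
    (mul_nonneg hγ0 (mul_nonneg (hpA x.1) (hpB x.2))).trans (hbounds x).1
  rw [miOf_eq_mutualInfo, mutualInfo_eq_sum_mul_logb_div _ hq0]
  simp only [hmargA, hmargB]
  refine sum_mul_logb_div_le hγ0 hγ1 (fun x => mul_nonneg (hpA x.1) (hpB x.2)) ?_ ?_
    (fun x => (hbounds x).1) (fun x => (hbounds x).2)
  · rw [Fintype.sum_prod_type]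
    simp only [hmargA, hsumA]
  · rw [Fintype.sum_prod_type, ← Fintype.sum_mul_sum, hsumA, hsumB, one_mul]

theorem miOf_compPVM_depol2 (hdiag : ∀ x, ρ x x = if x.1 = x.2 then 1 / 2 else 0) :
    miOf (compPVM (Fin 2)) (compPVM (Fin 2)) (depol2 γ ρ)
      = ((2 - γ) / 2) * logb 2 (2 - γ) + (γ / 2) * logb 2 γ := by
  rw [← mutualInfo_depolarized_sharedBit γ, miOf_eq_mutualInfo]
  congr 1
  funext x
  rw [jointProb_compPVM, depol2, Matrix.add_apply, Matrix.smul_apply, Matrix.smul_apply, hdiag,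
    one_apply_eq, smul_eq_mul, smul_eq_mul]
  split_ifs
  · norm_num
    ring
  · norm_num

theorem measuredMI_depol2_eq (hγ0 : 0 ≤ γ) (hγ1 : γ ≤ 1) (hρ : ρ.PosSemidef)
    (hm : HasMaximallyMixedMarginals ρ) (hdiag : ∀ x, ρ x x = if x.1 = x.2 then 1 / 2 else 0) :
    measuredMI (depol2 γ ρ) = ((2 - γ) / 2) * logb 2 (2 - γ) + (γ / 2) * logb 2 γ := by
  refine IsGreatest.csSup_eq
    ⟨⟨Fin 2, Fin 2, compPVM _, compPVM _, (miOf_compPVM_depol2 hdiag).symm⟩, ?_⟩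
  rintro _ ⟨ιA, ιB, P, Q, rfl⟩
  exact miOf_depol2_le hγ0 hγ1 hρ hm P Q

end TwoQubit

section States

theorem inv_sqrt_two_mul_self : ((√2 : ℝ) : ℂ)⁻¹ * ((√2 : ℝ) : ℂ)⁻¹ = 1 / 2 := by
  rw [← mul_inv, ← Complex.ofReal_mul, Real.mul_self_sqrt zero_le_two]
  norm_num

theorem bellState_posSemidef : bellState.PosSemidef :=
  posSemidef_vecMulVec_self_star bellVec

theorem bellState_apply_self (x : Fin 2 × Fin 2) :
    bellState x x = if x.1 = x.2 then 1 / 2 else 0 := by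
  by_cases h : x.1 = x.2 <;> simp [bellState, bellVec, h, inv_sqrt_two_mul_self]

theorem trace_kronecker_mul_bellState (A B : Matrix (Fin 2) (Fin 2) ℂ) :
    ((A ⊗ₖ B) * bellState).trace = (A * Bᵀ).trace / 2 := by
  simp [trace, mul_apply, Fintype.sum_prod_type, Fin.sum_univ_two, bellState, bellVec,
    inv_sqrt_two_mul_self, div_eq_mul_inv, add_mul]

theorem bellState_hasMaximallyMixedMarginals : HasMaximallyMixedMarginals bellState :=
  ⟨fun A => by rw [trace_kronecker_mul_bellState, transpose_one, mul_one],
    fun B => by rw [trace_kronecker_mul_bellState, one_mul, trace_transpose]⟩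

theorem sigma2_eq_diagonal : sigma2 = diagonal fun x => if x.1 = x.2 then 1 / 2 else 0 := by
  ext x y
  by_cases h : x = y
  · subst h; simp [sigma2]
  · simp [sigma2, h]

theorem sigma2_posSemidef : sigma2.PosSemidef := by
  rw [sigma2_eq_diagonal]
  refine PosSemidef.diagonal fun x => ?_
  split_ifs <;> norm_num [Complex.nonneg_iff]

theorem sigma2_apply_self (x : Fin 2 × Fin 2) :
    sigma2 x x = if x.1 = x.2 then 1 / 2 else 0 := by
  simp [sigma2]

theorem sigma2_hasMaximallyMixedMarginals : HasMaximallyMixedMarginals sigma2 := by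
  constructor <;> intro A <;>
    simp [trace, mul_apply, Fintype.sum_prod_type, Fin.sum_univ_two, sigma2, one_apply,
      div_eq_mul_inv, add_mul]

end States

/-- the measured mutual information of the depolarized Bell state
equals that of the depolarized shared random bit, and both equal
`((2−γ)/2)·log₂(2−γ) + (γ/2)·log₂ γ`. -/
theorem measuredMI_depolarized_bell_and_sigma
    (γ : ℝ) (hγ : γ ∈ Set.Icc (0 : ℝ) 1) :
    measuredMI (depol2 γ bellState)
      = ((2 - γ)/2) * Real.logb 2 (2 - γ) + (γ/2) * Real.logb 2 γ ∧
    measuredMI (depol2 γ sigma2)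
      = ((2 - γ)/2) * Real.logb 2 (2 - γ) + (γ/2) * Real.logb 2 γ :=
  ⟨measuredMI_depol2_eq hγ.1 hγ.2 bellState_posSemidef bellState_hasMaximallyMixedMarginals
      bellState_apply_self,
    measuredMI_depol2_eq hγ.1 hγ.2 sigma2_posSemidef sigma2_hasMaximallyMixedMarginals
      sigma2_apply_self⟩

end
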